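/- Let (A, σ) be a state BL-algebra that is subdirectly irreducible in the sense that among all state-filters different from {1} there is a least one. Then the image σ(A) is linearly ordered. Moreover, if Ker(σ) = {1}, then (A, σ) is subdirectly irreducible in this sense if and only if the BL-algebra σ(A) has a least filter different from {1} among its filters different from {1}. -/
import Mathlib


/-- A BL-algebra: a bounded lattice with a commutative monoid operation `mul` (⊙, with unit ⊤)
and a residuum `imp` (→) satisfying residuation, divisibility and prelinearity.
The constants 0 and 1 of the BL-algebra are `⊥` and `⊤`. -/
structure BLAlgebra (α : Type*) [Lattice α] [BoundedOrder α] where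
  mul : α → α → α
  imp : α → α → α
  mul_comm : ∀ a b : α, mul a b = mul b a
  mul_assoc : ∀ a b c : α, mul (mul a b) c = mul a (mul b c)
  mul_top : ∀ a : α, mul a ⊤ = a
  le_imp_iff : ∀ a b c : α, c ≤ imp a b ↔ mul a c ≤ b
  inf_eq_mul_imp : ∀ a b : α, a ⊓ b = mul a (imp a b)
  sup_imp_eq_top : ∀ a b : α, imp a b ⊔ imp b a = ⊤

namespace BLAlgebra

variable {α : Type*} [Lattice α] [BoundedOrder α]

/-- Negation `x⁻ := x → 0`. -/
def neg (A : BLAlgebra α) (x : α) : α := A.imp x ⊥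

/-- Powers: `x⁰ = 1`, `xⁿ⁺¹ = xⁿ ⊙ x`. -/
def pow (A : BLAlgebra α) (x : α) : ℕ → α
  | 0 => ⊤
  | n + 1 => A.mul (A.pow x n) x

/-- A state-operator on a BL-algebra. -/
def IsStateOperator (A : BLAlgebra α) (σ : α → α) : Prop :=
  σ ⊥ = ⊥ ∧
  (∀ x y : α, σ (A.imp x y) = A.imp (σ x) (σ (x ⊓ y))) ∧
  (∀ x y : α, σ (A.mul x y) = A.mul (σ x) (σ (A.imp x (A.mul x y)))) ∧
  (∀ x y : α, σ (A.mul (σ x) (σ y)) = A.mul (σ x) (σ y)) ∧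
  (∀ x y : α, σ (A.imp (σ x) (σ y)) = A.imp (σ x) (σ y))

/-- A strong state-operator: axioms (1), (2), (3′), (4), (5). -/
def IsStrongStateOperator (A : BLAlgebra α) (σ : α → α) : Prop :=
  σ ⊥ = ⊥ ∧
  (∀ x y : α, σ (A.imp x y) = A.imp (σ x) (σ (x ⊓ y))) ∧
  (∀ x y : α, σ (A.mul x y) = A.mul (σ x) (σ (A.neg x ⊔ y))) ∧
  (∀ x y : α, σ (A.mul (σ x) (σ y)) = A.mul (σ x) (σ y)) ∧
  (∀ x y : α, σ (A.imp (σ x) (σ y)) = A.imp (σ x) (σ y))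

/-- A state-morphism-operator: axioms (1), (2), (4), (5), (6). -/
def IsStateMorphismOperator (A : BLAlgebra α) (σ : α → α) : Prop :=
  σ ⊥ = ⊥ ∧
  (∀ x y : α, σ (A.imp x y) = A.imp (σ x) (σ (x ⊓ y))) ∧
  (∀ x y : α, σ (A.mul (σ x) (σ y)) = A.mul (σ x) (σ y)) ∧
  (∀ x y : α, σ (A.imp (σ x) (σ y)) = A.imp (σ x) (σ y)) ∧
  (∀ x y : α, σ (A.mul x y) = A.mul (σ x) (σ y))

/-- A filter of a BL-algebra: nonempty, closed under ⊙, upward closed. -/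
def IsFilter (A : BLAlgebra α) (F : Set α) : Prop :=
  F.Nonempty ∧ (∀ x ∈ F, ∀ y ∈ F, A.mul x y ∈ F) ∧ ∀ x ∈ F, ∀ y : α, x ≤ y → y ∈ F

/-- A filter of the subalgebra carried by the subset `S`. -/
def IsFilterOn (A : BLAlgebra α) (S F : Set α) : Prop :=
  F ⊆ S ∧ F.Nonempty ∧ (∀ x ∈ F, ∀ y ∈ F, A.mul x y ∈ F) ∧
    ∀ x ∈ F, ∀ y ∈ S, x ≤ y → y ∈ F

/-- A state-filter of `(A, σ)`: a filter closed under `σ`. -/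
def IsStateFilter (A : BLAlgebra α) (σ : α → α) (F : Set α) : Prop :=
  A.IsFilter F ∧ ∀ x ∈ F, σ x ∈ F

/-- A maximal filter: a proper filter not properly contained in any proper filter. -/
def IsMaximalFilter (A : BLAlgebra α) (F : Set α) : Prop :=
  A.IsFilter F ∧ F ≠ Set.univ ∧
    ∀ G : Set α, A.IsFilter G → G ≠ Set.univ → F ⊆ G → F = G

/-- A maximal filter of the subalgebra carried by `S`. -/
def IsMaximalFilterOn (A : BLAlgebra α) (S F : Set α) : Prop :=
  A.IsFilterOn S F ∧ F ≠ S ∧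
    ∀ G : Set α, A.IsFilterOn S G → G ≠ S → F ⊆ G → F = G

/-- A maximal state-filter of `(A, σ)`. -/
def IsMaximalStateFilter (A : BLAlgebra α) (σ : α → α) (F : Set α) : Prop :=
  A.IsStateFilter σ F ∧ F ≠ Set.univ ∧
    ∀ G : Set α, A.IsStateFilter σ G → G ≠ Set.univ → F ⊆ G → F = G

/-- The radical: the intersection of all maximal filters. -/
def Rad (A : BLAlgebra α) : Set α :=
  {x : α | ∀ F : Set α, A.IsMaximalFilter F → x ∈ F}

/-- The radical of the subalgebra carried by `S`. -/
def RadOn (A : BLAlgebra α) (S : Set α) : Set α :=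
  {x : α | x ∈ S ∧ ∀ F : Set α, A.IsMaximalFilterOn S F → x ∈ F}

/-- The kernel of a state-operator. -/
def Ker (_A : BLAlgebra α) (σ : α → α) : Set α := {x : α | σ x = ⊤}

end BLAlgebra

section BLAux

variable {α : Type*} [Lattice α] [BoundedOrder α] (A : BLAlgebra α)

lemma BL_imp_self (a : α) : A.imp a a = ⊤ :=
  le_antisymm le_top ((A.le_imp_iff a a ⊤).2 (by rw [A.mul_top]))

lemma BL_le_iff_imp (a b : α) : a ≤ b ↔ A.imp a b = ⊤ := by
  constructor
  · intro h
    exact top_le_iff.mp ((A.le_imp_iff a b ⊤).2 (by rwa [A.mul_top]))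
  · intro h
    have := (A.le_imp_iff a b ⊤).1 (h ▸ le_rfl)
    rwa [A.mul_top] at this

lemma BL_mul_le_left (a b : α) : A.mul a b ≤ a :=
  (A.le_imp_iff a a b).1 (by rw [BL_imp_self]; exact le_top)

lemma BL_mul_le_right (a b : α) : A.mul a b ≤ b := by
  rw [A.mul_comm]; exact BL_mul_le_left A b a

lemma BL_mul_mono {a a' b b' : α} (ha : a ≤ a') (hb : b ≤ b') :
    A.mul a b ≤ A.mul a' b' := by
  have h1 : A.mul a b ≤ A.mul a b' :=
    (A.le_imp_iff _ _ _).1 (le_trans hb ((A.le_imp_iff _ _ _).2 le_rfl))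
  have h2 : A.mul a b' ≤ A.mul a' b' := by
    rw [A.mul_comm a b', A.mul_comm a' b']
    exact (A.le_imp_iff _ _ _).1 (le_trans ha ((A.le_imp_iff _ _ _).2 le_rfl))
  exact h1.trans h2

lemma BL_mul_sup (a b c : α) : A.mul a (b ⊔ c) = A.mul a b ⊔ A.mul a c :=
  le_antisymm
    ((A.le_imp_iff _ _ _).1 (sup_le ((A.le_imp_iff _ _ _).2 le_sup_left)
      ((A.le_imp_iff _ _ _).2 le_sup_right)))
    (sup_le (BL_mul_mono A le_rfl le_sup_left) (BL_mul_mono A le_rfl le_sup_right))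

lemma BL_sup_mul_top {x y z : α} (hx : x ⊔ z = ⊤) (hy : y ⊔ z = ⊤) :
    A.mul x y ⊔ z = ⊤ := by
  have h1 : (⊤ : α) = A.mul (x ⊔ z) (y ⊔ z) := by rw [hx, hy, A.mul_top]
  have h2 : A.mul (x ⊔ z) (y ⊔ z) ≤ A.mul x y ⊔ z := by
    rw [BL_mul_sup]
    apply sup_le
    · rw [A.mul_comm, BL_mul_sup]
      apply sup_le
      · rw [A.mul_comm]; exact le_sup_left
      · exact le_trans (BL_mul_le_right A _ _) le_sup_right
    · exact le_trans (BL_mul_le_right A _ _) le_sup_right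
  exact le_antisymm le_top (h1.le.trans h2)

lemma BL_pow_one (u : α) : A.pow u 1 = u := by
  show A.mul ⊤ u = u
  rw [A.mul_comm, A.mul_top]

lemma BL_pow_add (u : α) (m n : ℕ) :
    A.pow u (m + n) = A.mul (A.pow u m) (A.pow u n) := by
  induction n with
  | zero => rw [Nat.add_zero]; exact (A.mul_top _).symm
  | succ n ih =>
    show A.mul (A.pow u (m + n)) u = A.mul (A.pow u m) (A.mul (A.pow u n) u)
    rw [ih, A.mul_assoc]

lemma BL_pow_sup_one {u v : α} (h : u ⊔ v = ⊤) (n : ℕ) : A.pow u n ⊔ v = ⊤ := by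
  induction n with
  | zero => exact top_sup_eq v
  | succ n ih => exact BL_sup_mul_top A ih h

lemma BL_pow_sup {u v : α} (h : u ⊔ v = ⊤) (m n : ℕ) :
    A.pow u m ⊔ A.pow v n = ⊤ := by
  have h1 := BL_pow_sup_one A h m
  have h2 : v ⊔ A.pow u m = ⊤ := by rwa [sup_comm] at h1
  have h3 := BL_pow_sup_one A h2 n
  rwa [sup_comm] at h3

variable {σ : α → α}

lemma BL_sigma_top (hσ : A.IsStateOperator σ) : σ ⊤ = ⊤ := by
  have h := hσ.2.1 ⊤ ⊤
  rw [BL_imp_self, inf_idem] at h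
  exact h.trans (BL_imp_self A (σ ⊤))

lemma BL_sigma_mono (hσ : A.IsStateOperator σ) {x y : α} (h : x ≤ y) : σ x ≤ σ y := by
  have hx : x = A.mul y (A.imp y x) := by
    rw [← A.inf_eq_mul_imp]; exact (inf_eq_right.2 h).symm
  have h3 := hσ.2.2.1 y (A.imp y x)
  rw [← hx] at h3
  exact h3.le.trans (BL_mul_le_left A _ _)

lemma BL_sigma_idem (hσ : A.IsStateOperator σ) (x : α) : σ (σ x) = σ x := by
  have h := hσ.2.2.2.1 x ⊤
  rwa [BL_sigma_top A hσ, A.mul_top] at h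

lemma BL_sigma_fix (hσ : A.IsStateOperator σ) {a : α} (ha : a ∈ Set.range σ) :
    σ a = a := by
  obtain ⟨b, rfl⟩ := ha
  exact BL_sigma_idem A hσ b

lemma BL_pow_fixed (hσ : A.IsStateOperator σ) {u : α} (hu : σ u = u) :
    ∀ n, σ (A.pow u n) = A.pow u n := by
  intro n
  induction n with
  | zero => exact BL_sigma_top A hσ
  | succ n ih =>
    show σ (A.mul (A.pow u n) u) = A.mul (A.pow u n) u
    calc σ (A.mul (A.pow u n) u) = σ (A.mul (σ (A.pow u n)) (σ u)) := by rw [ih, hu]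
      _ = A.mul (σ (A.pow u n)) (σ u) := hσ.2.2.2.1 _ _
      _ = A.mul (A.pow u n) u := by rw [ih, hu]

lemma BL_genFilter_state (hσ : A.IsStateOperator σ) {u : α} (hu : σ u = u) :
    A.IsStateFilter σ {z | ∃ n, A.pow u n ≤ z} := by
  refine ⟨⟨⟨u, 1, (BL_pow_one A u).le⟩, ?_, ?_⟩, ?_⟩
  · rintro x ⟨m, hm⟩ y ⟨n, hn⟩
    exact ⟨m + n, (BL_pow_add A u m n).le.trans (BL_mul_mono A hm hn)⟩
  · rintro x ⟨n, hn⟩ y hxy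
    exact ⟨n, hn.trans hxy⟩
  · rintro x ⟨n, hn⟩
    exact ⟨n, (BL_pow_fixed A hσ hu n) ▸ BL_sigma_mono A hσ hn⟩

lemma BL_top_mem_filter {F : Set α} (hF : A.IsFilter F) : ⊤ ∈ F := by
  obtain ⟨c, hc⟩ := hF.1
  exact hF.2.2 c hc ⊤ le_top

lemma BL_exists_ne_top {F : Set α} (htop : ⊤ ∈ F) (hne : F ≠ {⊤}) :
    ∃ c ∈ F, c ≠ ⊤ := by
  by_contra h
  push_neg at h
  apply hne
  ext z
  simp only [Set.mem_singleton_iff]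
  exact ⟨fun hz => h z hz, fun hz => hz ▸ htop⟩

lemma BL_upclosure_state (hσ : A.IsStateOperator σ) {G : Set α}
    (hG : A.IsFilterOn (Set.range σ) G) :
    A.IsStateFilter σ {z | ∃ g ∈ G, g ≤ z} := by
  obtain ⟨hsub, ⟨g0, hg0⟩, hmul, hup⟩ := hG
  refine ⟨⟨⟨g0, g0, hg0, le_rfl⟩, ?_, ?_⟩, ?_⟩
  · rintro x ⟨g, hg, hgx⟩ y ⟨h, hh, hhy⟩
    exact ⟨A.mul g h, hmul g hg h hh, BL_mul_mono A hgx hhy⟩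
  · rintro x ⟨g, hg, hgx⟩ y hxy
    exact ⟨g, hg, hgx.trans hxy⟩
  · rintro x ⟨g, hg, hgx⟩
    refine ⟨g, hg, ?_⟩
    calc g = σ g := (BL_sigma_fix A hσ (hsub hg)).symm
      _ ≤ σ x := BL_sigma_mono A hσ hgx

lemma BL_top_mem_filterOn (hσ : A.IsStateOperator σ) {G : Set α}
    (hG : A.IsFilterOn (Set.range σ) G) : ⊤ ∈ G := by
  obtain ⟨g0, hg0⟩ := hG.2.1
  exact hG.2.2.2 g0 hg0 ⊤ ⟨⊤, BL_sigma_top A hσ⟩ le_top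

lemma BL_inter_filterOn (hσ : A.IsStateOperator σ) {F : Set α}
    (hF : A.IsStateFilter σ F) : A.IsFilterOn (Set.range σ) (F ∩ Set.range σ) := by
  refine ⟨Set.inter_subset_right, ⟨⊤, BL_top_mem_filter A hF.1, ⟨⊤, BL_sigma_top A hσ⟩⟩,
    ?_, ?_⟩
  · rintro x ⟨hxF, a, ha⟩ y ⟨hyF, b, hb⟩
    refine ⟨hF.1.2.1 x hxF y hyF, A.mul x y, ?_⟩
    rw [← ha, ← hb]
    exact hσ.2.2.2.1 a b
  · rintro x ⟨hxF, _⟩ y hy hxy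
    exact ⟨hF.1.2.2 x hxF y hxy, hy⟩

lemma BL_inter_ne (hσ : A.IsStateOperator σ) (hker : A.Ker σ = {⊤}) {F : Set α}
    (hF : A.IsStateFilter σ F) (hFne : F ≠ {⊤}) : F ∩ Set.range σ ≠ {⊤} := by
  obtain ⟨c, hcF, hc⟩ := BL_exists_ne_top (BL_top_mem_filter A hF.1) hFne
  intro h
  have hmem : σ c ∈ F ∩ Set.range σ := ⟨hF.2 c hcF, c, rfl⟩
  rw [h, Set.mem_singleton_iff] at hmem
  have : c ∈ A.Ker σ := hmem
  rw [hker, Set.mem_singleton_iff] at this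
  exact hc this

end BLAux

/-- if a state BL-algebra (A, σ) is subdirectly irreducible (there is a least
state-filter among the state-filters different from {⊤}), then σ(A) is linearly ordered;
moreover, if Ker(σ) = {⊤}, then (A, σ) is subdirectly irreducible iff the BL-algebra σ(A)
has a least filter different from {⊤} among its filters different from {⊤}. -/
theorem subdirectlyIrreducible_image_linear {α : Type*} [Lattice α] [BoundedOrder α]
    (A : BLAlgebra α) (σ : α → α) (hσ : A.IsStateOperator σ) :
    ((∃ F : Set α, A.IsStateFilter σ F ∧ F ≠ {⊤} ∧
        ∀ G : Set α, A.IsStateFilter σ G → G ≠ {⊤} → F ⊆ G) →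
      ∀ x ∈ Set.range σ, ∀ y ∈ Set.range σ, x ≤ y ∨ y ≤ x) ∧
    (A.Ker σ = {⊤} →
      ((∃ F : Set α, A.IsStateFilter σ F ∧ F ≠ {⊤} ∧
          ∀ G : Set α, A.IsStateFilter σ G → G ≠ {⊤} → F ⊆ G) ↔
        (∃ F : Set α, A.IsFilterOn (Set.range σ) F ∧ F ≠ {⊤} ∧
          ∀ G : Set α, A.IsFilterOn (Set.range σ) G → G ≠ {⊤} → F ⊆ G))) := by
  constructor
  · rintro ⟨F, hF, hFne, hleast⟩ x ⟨x0, rfl⟩ y ⟨y0, rfl⟩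
    by_contra hcon
    push_neg at hcon
    obtain ⟨hxy, hyx⟩ := hcon
    have hu : σ (A.imp (σ x0) (σ y0)) = A.imp (σ x0) (σ y0) := hσ.2.2.2.2 x0 y0
    have hv : σ (A.imp (σ y0) (σ x0)) = A.imp (σ y0) (σ x0) := hσ.2.2.2.2 y0 x0
    have hFu := BL_genFilter_state A hσ hu
    have hFv := BL_genFilter_state A hσ hv
    have hFune : {z | ∃ n, A.pow (A.imp (σ x0) (σ y0)) n ≤ z} ≠ {⊤} := by
      intro h
      apply hxy
      have hm : A.imp (σ x0) (σ y0) ∈ {z | ∃ n, A.pow (A.imp (σ x0) (σ y0)) n ≤ z} :=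
        ⟨1, (BL_pow_one A _).le⟩
      rw [h, Set.mem_singleton_iff] at hm
      exact (BL_le_iff_imp A _ _).2 hm
    have hFvne : {z | ∃ n, A.pow (A.imp (σ y0) (σ x0)) n ≤ z} ≠ {⊤} := by
      intro h
      apply hyx
      have hm : A.imp (σ y0) (σ x0) ∈ {z | ∃ n, A.pow (A.imp (σ y0) (σ x0)) n ≤ z} :=
        ⟨1, (BL_pow_one A _).le⟩
      rw [h, Set.mem_singleton_iff] at hm
      exact (BL_le_iff_imp A _ _).2 hm
    obtain ⟨c, hcF, hc⟩ := BL_exists_ne_top (BL_top_mem_filter A hF.1) hFne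
    obtain ⟨m, hm⟩ := hleast _ hFu hFune hcF
    obtain ⟨n, hn⟩ := hleast _ hFv hFvne hcF
    have hsup := BL_pow_sup A (A.sup_imp_eq_top (σ x0) (σ y0)) m n
    exact hc (le_antisymm le_top (hsup.ge.trans (sup_le hm hn)))
  · intro hker
    constructor
    · rintro ⟨F, hF, hFne, hleast⟩
      refine ⟨F ∩ Set.range σ, BL_inter_filterOn A hσ hF,
        BL_inter_ne A hσ hker hF hFne, ?_⟩
      intro G' hG' hG'ne
      have hF' := BL_upclosure_state A hσ hG'
      have hF'ne : {z | ∃ g ∈ G', g ≤ z} ≠ {⊤} := by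
        obtain ⟨g, hg, hgt⟩ := BL_exists_ne_top (BL_top_mem_filterOn A hσ hG') hG'ne
        intro h
        have : g ∈ {z | ∃ g ∈ G', g ≤ z} := ⟨g, hg, le_rfl⟩
        rw [h, Set.mem_singleton_iff] at this
        exact hgt this
      have hsub := hleast _ hF' hF'ne
      rintro z ⟨hzF, hzr⟩
      obtain ⟨g, hgG', hgz⟩ := hsub hzF
      exact hG'.2.2.2 g hgG' z hzr hgz
    · rintro ⟨G, hG, hGne, hleast⟩
      refine ⟨{z | ∃ g ∈ G, g ≤ z}, BL_upclosure_state A hσ hG, ?_, ?_⟩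
      · obtain ⟨g, hg, hgt⟩ := BL_exists_ne_top (BL_top_mem_filterOn A hσ hG) hGne
        intro h
        have : g ∈ {z | ∃ g ∈ G, g ≤ z} := ⟨g, hg, le_rfl⟩
        rw [h, Set.mem_singleton_iff] at this
        exact hgt this
      · intro F' hF' hF'ne
        have hsub := hleast (F' ∩ Set.range σ) (BL_inter_filterOn A hσ hF')
          (BL_inter_ne A hσ hker hF' hF'ne)
        rintro z ⟨g, hg, hgz⟩
        exact hF'.1.2.2 g (hsub hg).1 z hgz
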